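/- arXiv:2302.09050 — 6 statements merged into one kernel-verified Lean document; each statement's English description precedes it below -/
import Mathlib

section
/- Let n, k be natural numbers and let F be a family of k-element subsets of {1,…,n} that is intersecting (any two members of F have nonempty intersection) and maximal with this property, i.e. every k-element subset E of {1,…,n} either belongs to F or is disjoint from some member of F. Then |F| ≥ C(n,k) / (C(n-k,k) + 1), where C(a,b) denotes the binomial coefficient. -/
/-!
Every `k`-set lies in `F` or avoids one of its members `A`, i.e. lies in the complement of `A`,
which has `n - k` points. Hence the `C(n,k)` sets of size `k` are covered by `F` together with
`|F|` families of size `C(n-k,k)`.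
-/

open Finset

namespace Finset

variable {α : Type*} [Fintype α] [DecidableEq α] {F : Finset (Finset α)} {k : ℕ}

lemma powersetCard_univ_subset_union_biUnion_compl
    (hmax : ∀ E : Finset α, #E = k → E ∈ F ∨ ∃ A ∈ F, Disjoint E A) :
    univ.powersetCard k ⊆ F ∪ F.biUnion fun A => Aᶜ.powersetCard k := by
  intro E hE
  rw [mem_powersetCard] at hE
  rcases hmax E hE.2 with hEF | ⟨A, hA, hdisj⟩
  · exact mem_union_left _ hEF
  · refine mem_union_right _ (mem_biUnion.2 ⟨A, hA, ?_⟩)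
    exact mem_powersetCard.2 ⟨le_compl_iff_disjoint_right.2 hdisj, hE.2⟩

lemma card_biUnion_powersetCard_compl_le (hcard : ∀ A ∈ F, #A = k) :
    #(F.biUnion fun A => Aᶜ.powersetCard k) ≤ #F * (Fintype.card α - k).choose k :=
  calc #(F.biUnion fun A => Aᶜ.powersetCard k)
      ≤ ∑ A ∈ F, #(Aᶜ.powersetCard k) := card_biUnion_le
    _ = ∑ _A ∈ F, (Fintype.card α - k).choose k :=
        sum_congr rfl fun A hA => by rw [card_powersetCard, card_compl, hcard A hA]
    _ = #F * (Fintype.card α - k).choose k := by rw [sum_const, smul_eq_mul]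

theorem choose_le_card_mul_of_forall_mem_or_disjoint (hcard : ∀ A ∈ F, #A = k)
    (hmax : ∀ E : Finset α, #E = k → E ∈ F ∨ ∃ A ∈ F, Disjoint E A) :
    (Fintype.card α).choose k ≤ #F * ((Fintype.card α - k).choose k + 1) :=
  calc (Fintype.card α).choose k
      = #(univ.powersetCard k : Finset (Finset α)) := by rw [card_powersetCard, card_univ]
    _ ≤ #(F ∪ F.biUnion fun A => Aᶜ.powersetCard k) :=
        card_le_card (powersetCard_univ_subset_union_biUnion_compl hmax)
    _ ≤ #F + #F * (Fintype.card α - k).choose k :=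
        (card_union_le _ _).trans (Nat.add_le_add_left (card_biUnion_powersetCard_compl_le hcard) _)
    _ = #F * ((Fintype.card α - k).choose k + 1) := by ring

end Finset

theorem stmt_4_general (n k : ℕ) (F : Finset (Finset (Fin n)))
    (hcard : ∀ E ∈ F, E.card = k)
    (hmax : ∀ E : Finset (Fin n), E.card = k → E ∈ F ∨ ∃ A ∈ F, Disjoint E A) :
    (n.choose k : ℝ) / ((n - k).choose k + 1) ≤ F.card := by
  have hcount := choose_le_card_mul_of_forall_mem_or_disjoint hcard hmax
  rw [Fintype.card_fin] at hcount
  rw [div_le_iff₀ (by positivity)]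
  exact_mod_cast hcount

/-- A maximal intersecting family of `k`-element subsets of `{1,…,n}` has at
least `C(n,k) / (C(n-k,k) + 1)` members. -/
theorem stmt_4 (n k : ℕ) (F : Finset (Finset (Fin n)))
    (hcard : ∀ E ∈ F, E.card = k)
    (hint : ∀ A ∈ F, ∀ B ∈ F, (A ∩ B).Nonempty)
    (hmax : ∀ E : Finset (Fin n), E.card = k → E ∈ F ∨ ∃ A ∈ F, Disjoint E A) :
    (n.choose k : ℝ) / ((n - k).choose k + 1) ≤ F.card :=
  stmt_4_general n k F hcard hmax
end

section
/- For every real c with 0 < c < 1/2, one has −2·(1−c)·log(1−c) + (1−2c)·log(1−2c) > 0. -/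
open Real

theorem StrictConvexOn.two_mul_apply_midpoint_lt {s : Set ℝ} {f : ℝ → ℝ}
    (hf : StrictConvexOn ℝ s f) {x y : ℝ} (hx : x ∈ s) (hy : y ∈ s) (hxy : x ≠ y) :
    2 * f ((x + y) / 2) < f x + f y := by
  have h := hf.2 hx hy hxy (by norm_num : (0 : ℝ) < 1 / 2) (by norm_num : (0 : ℝ) < 1 / 2)
    (by norm_num)
  simp only [smul_eq_mul] at h
  rw [show 1 / 2 * x + 1 / 2 * y = (x + y) / 2 by ring] at h
  linarith

/-- For `0 < c < 1/2`, `p_N(c) - p_d(c) = -2(1-c)log(1-c) + (1-2c)log(1-2c) > 0`. -/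
theorem stmt_6 (c : ℝ) (h0 : 0 < c) (h1 : c < 1 / 2) :
    0 < -2 * (1 - c) * Real.log (1 - c) + (1 - 2 * c) * Real.log (1 - 2 * c) := by
  -- `1 - c` is the midpoint of `1 - 2c` and `1`, where `x log x` vanishes.
  have h := strictConvexOn_mul_log.two_mul_apply_midpoint_lt
    (show 1 - 2 * c ∈ Set.Ici (0 : ℝ) from Set.mem_Ici.2 (by linarith))
    (show (1 : ℝ) ∈ Set.Ici 0 from Set.mem_Ici.2 zero_le_one) (by linarith)
  rw [show (1 - 2 * c + 1) / 2 = 1 - c by ring, log_one, mul_zero, add_zero] at h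
  linarith
end

section
/- Let g(x) = x·log(x) for x > 0. Fix real constants a > b > 0. Then the function n ↦ log C(⌊a·n⌋, ⌊b·n⌋) − (g(a) − g(b) − g(a−b))·n, defined for natural numbers n, is O(log n) as n → ∞. Here C(·,·) denotes the binomial coefficient and log the natural logarithm. -/
/-!
Write `F x = x log x - x`. Stirling's formula gives `log m! = F m + O(log m)`. If `m = c n + O(1)`
then, since `F' = log`, moving from `m` to `c n` costs `O(log n)`, so `log m! = F (c n) + O(log n)`.
Apply this to `⌊a n⌋`, `⌊b n⌋` and their difference `⌊a n⌋ - ⌊b n⌋ = (a - b) n + O(1)`, and use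
`log C(m, k) = log m! - log k! - log (m - k)!`. As `F (c n) = g(c) n + c (n log n - n)` and the
coefficients `c` add up, only the `g` terms survive.
-/

open Asymptotics Filter

open Real
open scoped Nat

lemma mul_log_sub_self_sub_mem_Icc {x y : ℝ} (hy : 0 < y) (hyx : y ≤ x) :
    (x * log x - x) - (y * log y - y) ∈ Set.Icc ((x - y) * log y) ((x - y) * log x) := by
  have hx : 0 < x := hy.trans_le hyx
  have hlog : log (x / y) = log x - log y := log_div hx.ne' hy.ne'
  have lower : x - y ≤ x * (log x - log y) := by
    have := one_sub_inv_le_log_of_pos (div_pos hx hy)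
    rw [inv_div, hlog] at this
    have := mul_le_mul_of_nonneg_left this hx.le
    rwa [mul_sub, mul_one, mul_div_cancel₀ _ hx.ne'] at this
  have upper : y * (log x - log y) ≤ x - y := by
    have := log_le_sub_one_of_pos (div_pos hx hy)
    rw [hlog] at this
    have := mul_le_mul_of_nonneg_left this hy.le
    rwa [mul_sub y (x / y), mul_one, mul_div_cancel₀ _ hy.ne'] at this
  constructor <;> nlinarith

lemma abs_mul_log_sub_sub_le {x y : ℝ} (hx : 0 < x) (hy : 0 < y) :
    |(x * log x - x) - (y * log y - y)| ≤ |x - y| * (|log x| + |log y|) := by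
  wlog hyx : y ≤ x generalizing x y
  · rw [abs_sub_comm, abs_sub_comm x, add_comm]
    exact this hy hx (le_of_not_ge hyx)
  obtain ⟨lower, upper⟩ := mul_log_sub_self_sub_mem_Icc hy hyx
  have hxy : 0 ≤ x - y := sub_nonneg.2 hyx
  rw [abs_of_nonneg hxy, abs_le]
  constructor <;>
    nlinarith [neg_abs_le (log y), le_abs_self (log x), abs_nonneg (log x), abs_nonneg (log y)]

lemma isLittleO_const_log_natCast (c : ℝ) : (fun _ : ℕ => c) =o[atTop] fun n => log n :=
  isLittleO_const_log_atTop.comp_tendsto tendsto_natCast_atTop_atTop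

lemma isBigO_log_const_mul_natCast {c : ℝ} (hc : c ≠ 0) :
    (fun n : ℕ => log (c * n)) =O[atTop] fun n => log n := by
  refine ((isLittleO_const_log_natCast (log c)).isBigO.add (isBigO_refl _ _)).congr' ?_ .rfl
  filter_upwards [eventually_ne_atTop 0] with n hn
  rw [log_mul hc (Nat.cast_ne_zero.2 hn)]

lemma isBigO_log_factorial_sub :
    (fun n : ℕ => log n ! - (n * log n - n)) =O[atTop] fun n => log n := by
  have hseq : (fun n => log (Stirling.stirlingSeq n)) =O[atTop] fun n => log n :=
    (((continuousAt_log (sqrt_pos.2 pi_pos).ne').tendsto.comp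
      Stirling.tendsto_stirlingSeq_sqrt_pi).isBigO_one ℝ).trans
      (isLittleO_const_log_natCast 1).isBigO
  refine (hseq.add ((isBigO_log_const_mul_natCast two_ne_zero).const_mul_left (1 / 2))).congr'
    ?_ .rfl
  filter_upwards [eventually_ne_atTop 0] with n hn
  rw [Stirling.log_stirlingSeq_formula, log_div (Nat.cast_ne_zero.2 hn) (exp_ne_zero 1), log_exp]
  ring

lemma isBigO_log_natCast_comp {m : ℕ → ℕ}
    (hm : (fun n => (m n : ℝ)) =O[atTop] fun n => (n : ℝ)) :
    (fun n => log (m n)) =O[atTop] fun n => log n := by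
  obtain ⟨K, hK⟩ := hm.bound
  refine .trans (.of_bound' ?_)
    ((isLittleO_const_log_natCast |log K|).isBigO.add (isBigO_refl _ _))
  filter_upwards [hK, eventually_ne_atTop 0] with n hmn hn
  rcases eq_or_ne (m n) 0 with hm0 | hm0
  · simp [hm0]
  have hm1 : (1 : ℝ) ≤ m n := Nat.one_le_cast.2 (Nat.one_le_iff_ne_zero.2 hm0)
  have hn0 : (0 : ℝ) < n := Nat.cast_pos.2 (Nat.pos_of_ne_zero hn)
  rw [norm_natCast, norm_natCast] at hmn
  have hK0 : 0 < K := pos_of_mul_pos_left (one_pos.trans_le (hm1.trans hmn)) hn0.le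
  have : log (m n) ≤ log K + log n := by
    rw [← log_mul hK0.ne' hn0.ne']
    exact log_le_log (one_pos.trans_le hm1) hmn
  rw [norm_of_nonneg (log_natCast_nonneg _), norm_of_nonneg (by positivity)]
  linarith [le_abs_self (log K)]

lemma isBigO_log_factorial_sub_of_isBigO_sub {c : ℝ} (hc : 0 < c) {m : ℕ → ℕ}
    (hm : (fun n => (m n : ℝ) - c * n) =O[atTop] fun _ => (1 : ℝ)) :
    (fun n => log (m n)! - (c * n * log (c * n) - c * n)) =O[atTop] fun n => log n := by
  have hcn : Tendsto (fun n : ℕ => c * n) atTop atTop :=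
    tendsto_natCast_atTop_atTop.const_mul_atTop hc
  have hequiv : (fun n => (m n : ℝ)) ~[atTop] fun n => c * n :=
    hm.trans_isLittleO ((isLittleO_one_left_iff ℝ).2 (tendsto_norm_atTop_atTop.comp hcn))
  have hm_top : Tendsto m atTop atTop :=
    tendsto_natCast_atTop_iff.1 (hequiv.symm.tendsto_atTop hcn)
  have hlog_m : (fun n => log (m n)) =O[atTop] fun n => log n :=
    isBigO_log_natCast_comp (hequiv.isBigO.trans ((isBigO_refl _ _).const_mul_left c))
  have stirling : (fun n => log (m n)! - (m n * log (m n) - m n)) =O[atTop] fun n => log n :=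
    (isBigO_log_factorial_sub.comp_tendsto hm_top).trans hlog_m
  have shift : (fun n => (m n * log (m n) - m n) - (c * n * log (c * n) - c * n))
      =O[atTop] fun n => log n := by
    have hlog_sum : (fun n : ℕ => |log (m n)| + |log (c * n)|) =O[atTop] fun n => log n :=
      (isBigO_abs_left.2 hlog_m).add (isBigO_abs_left.2 (isBigO_log_const_mul_natCast hc.ne'))
    refine .trans (.of_bound' ?_) ((hm.mul hlog_sum).congr_right fun n => one_mul _)
    filter_upwards [hm_top.eventually_gt_atTop 0, eventually_gt_atTop 0] with n hm0 hn0
    rw [norm_mul, norm_of_nonneg (by positivity : 0 ≤ |log (m n)| + |log (c * n)|)]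
    exact abs_mul_log_sub_sub_le (Nat.cast_pos.2 hm0) (by positivity)
  exact (stirling.add shift).congr_left fun n => by ring

lemma isBigO_natFloor_mul_sub {c : ℝ} (hc : 0 ≤ c) :
    (fun n : ℕ => (⌊c * n⌋₊ : ℝ) - c * n) =O[atTop] fun _ => (1 : ℝ) :=
  isBigO_one_nat_atTop_iff.2 ⟨1, fun n => Nat.abs_floor_sub_le (by positivity)⟩

lemma log_choose_eq_log_factorial_sub {n k : ℕ} (h : k ≤ n) :
    log (n.choose k) = log n ! - log k ! - log (n - k)! := by
  have hchoose : (n.choose k : ℝ) * k ! * (n - k)! = n ! := by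
    exact_mod_cast Nat.choose_mul_factorial_mul_factorial h
  have hpos : (0 : ℝ) < n.choose k := Nat.cast_pos.2 (Nat.choose_pos h)
  rw [← hchoose, log_mul (by positivity) (by positivity), log_mul hpos.ne' (by positivity)]
  ring

/-- Stirling-type estimate: with `g(x) = x log x` and constants `a > b > 0`,
`log C(⌊an⌋, ⌊bn⌋) = (g(a) - g(b) - g(a-b)) n + O(log n)` as `n → ∞`. -/
theorem stmt_8 (a b : ℝ) (hb : 0 < b) (hab : b < a) :
    (fun n : ℕ => Real.log ((Nat.floor (a * n)).choose (Nat.floor (b * n)))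
        - (a * Real.log a - b * Real.log b - (a - b) * Real.log (a - b)) * n)
      =O[atTop] (fun n : ℕ => Real.log n) := by
  have ha : 0 < a := hb.trans hab
  have hab' : 0 < a - b := sub_pos.2 hab
  have hkm (n : ℕ) : ⌊b * n⌋₊ ≤ ⌊a * n⌋₊ := Nat.floor_le_floor (by gcongr)
  have hm := isBigO_natFloor_mul_sub ha.le
  have hk := isBigO_natFloor_mul_sub hb.le
  have hd : (fun n : ℕ => ((⌊a * n⌋₊ - ⌊b * n⌋₊ : ℕ) : ℝ) - (a - b) * n)
      =O[atTop] fun _ => (1 : ℝ) :=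
    (hm.sub hk).congr_left fun n => by rw [Nat.cast_sub (hkm n)]; ring
  refine (((isBigO_log_factorial_sub_of_isBigO_sub ha hm).sub
    (isBigO_log_factorial_sub_of_isBigO_sub hb hk)).sub
    (isBigO_log_factorial_sub_of_isBigO_sub hab' hd)).congr' ?_ .rfl
  filter_upwards [eventually_ne_atTop 0] with n hn
  have hn0 : (n : ℝ) ≠ 0 := Nat.cast_ne_zero.2 hn
  rw [log_choose_eq_log_factorial_sub (hkm n), log_mul ha.ne' hn0, log_mul hb.ne' hn0,
    log_mul hab'.ne' hn0]
  ring
end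

section
/- For every real c with 0 < c < 1/2 there exist a real ε > 0 and a natural number n₀ such that for all n ≥ n₀, setting k = ⌊c·n⌋, N = C(n,k) and d = C(n−k,k), one has N^ε ≤ d ≤ N^{1−ε}. -/
/-! Put `q = 1 + t` with `t n ≤ k` and `t n ≤ n - 2k`. Since `C(m+1,k) / C(m,k) = (m+1)/(m+1-k)`
is at least `q` for `m < n`, raising the top index from `k` to `n - k` gives `d ≥ q^(n-2k)`, and
from `n - k` to `n` gives `N ≥ q^k d`. As `N ≤ 2^n`, the exponent `ε = t log q / log 2` makes
`N^ε ≤ q^(t n)`, which is at most both `q^(n-2k)` and `q^k`. -/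

open Real

namespace Nat

lemma mul_choose_le_choose_succ {q : ℝ} {m k : ℕ} (hk : k ≤ m + 1)
    (h : q * ((m : ℝ) + 1 - k) ≤ m + 1) : q * m.choose k ≤ (m + 1).choose k := by
  have habsorb : (m.choose k : ℝ) * (m + 1) = (m + 1).choose k * ((m : ℝ) + 1 - k) := by
    have := congrArg (Nat.cast : ℕ → ℝ) (Nat.choose_mul_succ_eq m k)
    push_cast [Nat.cast_sub hk] at this
    exact this
  have hm : (0 : ℝ) < m + 1 := by positivity
  rw [← mul_le_mul_iff_of_pos_right hm]
  calc q * m.choose k * (m + 1) = (m + 1).choose k * (q * ((m : ℝ) + 1 - k)) := by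
        rw [mul_assoc, habsorb]; ring
    _ ≤ (m + 1).choose k * (m + 1) := by gcongr

/-- The ratio `(m+1)/(m+1-k)` decreases in `m`, so it is enough to check it at the last step. -/
lemma pow_mul_choose_le_choose_add {q : ℝ} (hq : 1 ≤ q) {k a : ℕ} (hk : k ≤ a) (j : ℕ)
    (h : q * ((a : ℝ) + j - k) ≤ a + j) : q ^ j * a.choose k ≤ (a + j).choose k := by
  induction j with
  | zero => simp
  | succ j ih =>
    push_cast at h
    have hprev : q * ((a : ℝ) + j - k) ≤ a + j := by linarith
    have hstep := mul_choose_le_choose_succ (by omega : k ≤ a + j + 1)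
      (by push_cast; linarith : q * (((a + j : ℕ) : ℝ) + 1 - k) ≤ (a + j : ℕ) + 1)
    calc q ^ (j + 1) * a.choose k = q * (q ^ j * a.choose k) := by ring
      _ ≤ q * (a + j).choose k := by gcongr; exact ih hprev
      _ ≤ (a + (j + 1)).choose k := hstep

end Nat

lemma rpow_log_div_log_two_le {N q t : ℝ} {n : ℕ} (hN0 : 0 ≤ N) (hN : N ≤ 2 ^ n)
    (hq : 1 ≤ q) (ht : 0 ≤ t) : N ^ (t * log q / log 2) ≤ q ^ (t * n) := by
  have hε : 0 ≤ t * log q / log 2 := by have := log_nonneg hq; positivity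
  calc N ^ (t * log q / log 2) ≤ ((2 : ℝ) ^ n) ^ (t * log q / log 2) := by gcongr
    _ = q ^ (t * n) := by
      rw [← rpow_natCast, ← rpow_mul (by norm_num), rpow_def_of_pos (by norm_num),
        rpow_def_of_pos (by linarith)]
      congr 1
      field_simp

lemma le_rpow_one_sub_of_rpow_mul_le {N d ε : ℝ} (hN : 0 < N) (h : N ^ ε * d ≤ N) :
    d ≤ N ^ (1 - ε) := by
  rw [rpow_sub hN, rpow_one, le_div_iff₀ (rpow_pos_of_pos hN ε)]
  linarith

lemma choose_sub_choose_rpow_bounds {n k : ℕ} {t : ℝ} (ht : 0 < t) (htk : t * n ≤ k)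
    (htn : t * n ≤ n - 2 * k) :
    (n.choose k : ℝ) ^ (t * log (1 + t) / log 2) ≤ (n - k).choose k ∧
      ((n - k).choose k : ℝ) ≤ (n.choose k : ℝ) ^ (1 - t * log (1 + t) / log 2) := by
  set q : ℝ := 1 + t
  have hq : 1 ≤ q := by linarith
  have h2k : 2 * k ≤ n := by
    have : (0 : ℝ) ≤ t * n := by positivity
    have : ((2 * k : ℕ) : ℝ) ≤ n := by push_cast; linarith
    exact_mod_cast this
  have hcast : ((n - 2 * k : ℕ) : ℝ) = n - 2 * k := by push_cast [Nat.cast_sub h2k]; ring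
  have hdeg : q ^ (n - 2 * k) ≤ ((n - k).choose k : ℝ) := by
    have h := Nat.pow_mul_choose_le_choose_add hq (le_refl k) (n - 2 * k)
      (by rw [hcast]; nlinarith)
    rwa [Nat.choose_self, Nat.cast_one, mul_one, (by omega : k + (n - 2 * k) = n - k)] at h
  have hvert : q ^ k * ((n - k).choose k : ℝ) ≤ n.choose k := by
    have h := Nat.pow_mul_choose_le_choose_add hq (by omega : k ≤ n - k) k
      (by push_cast [Nat.cast_sub (by omega : k ≤ n)]; nlinarith)
    rwa [Nat.sub_add_cancel (by omega)] at h
  have hN : (n.choose k : ℝ) ^ (t * log q / log 2) ≤ q ^ (t * n) :=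
    rpow_log_div_log_two_le (by positivity) (by exact_mod_cast Nat.choose_le_two_pow n k) hq
      ht.le
  constructor
  · calc (n.choose k : ℝ) ^ (t * log q / log 2) ≤ q ^ (t * n) := hN
      _ ≤ q ^ ((n - 2 * k : ℕ) : ℝ) := rpow_le_rpow_of_exponent_le hq (by rw [hcast]; exact htn)
      _ ≤ (n - k).choose k := by rw [rpow_natCast]; exact hdeg
  · refine le_rpow_one_sub_of_rpow_mul_le
      (by exact_mod_cast Nat.choose_pos (by omega : k ≤ n)) ?_
    calc (n.choose k : ℝ) ^ (t * log q / log 2) * (n - k).choose k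
        ≤ q ^ (k : ℝ) * (n - k).choose k := by
          gcongr
          exact hN.trans (rpow_le_rpow_of_exponent_le hq htk)
      _ ≤ n.choose k := by rw [rpow_natCast]; exact hvert

lemma floor_mul_bounds {c : ℝ} (hc0 : 0 < c) {n : ℕ} (hn : ⌈2 / c⌉₊ ≤ n) :
    min (1 - 2 * c) (c / 2) * n ≤ ⌊c * n⌋₊ ∧
      min (1 - 2 * c) (c / 2) * n ≤ n - 2 * ⌊c * n⌋₊ := by
  have hcn : 2 ≤ c * n := by
    have := Nat.ceil_le.mp hn
    rwa [div_le_iff₀ hc0, mul_comm] at this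
  have hfloor_le : (⌊c * n⌋₊ : ℝ) ≤ c * n := Nat.floor_le (by positivity)
  have hfloor_gt : c * n - 1 < ⌊c * n⌋₊ := by linarith [Nat.lt_floor_add_one (c * n)]
  have hn0 : (0 : ℝ) ≤ n := n.cast_nonneg
  constructor
  · nlinarith [min_le_right (1 - 2 * c) (c / 2)]
  · nlinarith [min_le_left (1 - 2 * c) (c / 2)]

/-- For `0 < c < 1/2` there is an `ε > 0` such that for all large `n`, setting
`k = ⌊cn⌋`, `N = C(n,k)` (number of vertices of the Kneser graph `K(n,k)`) and
`d = C(n-k,k)` (its degree), one has `N^ε ≤ d ≤ N^{1-ε}`. -/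
theorem stmt_9 (c : ℝ) (hc0 : 0 < c) (hc : c < 1 / 2) :
    ∃ ε : ℝ, 0 < ε ∧ ∃ n₀ : ℕ, ∀ n : ℕ, n₀ ≤ n →
      ((n.choose ⌊c * n⌋₊ : ℝ) ^ ε ≤ ((n - ⌊c * n⌋₊).choose ⌊c * n⌋₊ : ℝ) ∧
        ((n - ⌊c * n⌋₊).choose ⌊c * n⌋₊ : ℝ) ≤ (n.choose ⌊c * n⌋₊ : ℝ) ^ (1 - ε)) := by
  set t := min (1 - 2 * c) (c / 2)
  have ht : 0 < t := lt_min (by linarith) (by linarith)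
  have hlog : 0 < log (1 + t) := log_pos (by linarith)
  refine ⟨t * log (1 + t) / log 2, by positivity, ⌈2 / c⌉₊, fun n hn => ?_⟩
  obtain ⟨htk, htn⟩ := floor_mul_bounds hc0 hn
  exact_mod_cast choose_sub_choose_rpow_bounds ht htk htn
end

section
/- For every real c with 0 < c < 1/2 there exist a real ε > 0 and a natural number n₀ such that for all n ≥ n₀ the following holds with k = ⌊c·n⌋, N = C(n,k) and d = C(n−k,k): for every k-element subset S of {1,…,n}, the number of k-element subsets S' of {1,…,n} for which the number of k-element subsets T with T ∩ S = ∅ and T ∩ S' = ∅ exceeds d·N^{−ε} is at most d·N^{−ε}. -/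
/-! With `i = #(S' \ S)`, the codegree of `S` and `S'` is `C(n - k - i, k)`, which is at most
`d (1 - k/(n-k))^i ≤ d e^{-ci/2}`. As `N ≤ 2^n`, a codegree above `d N^{-ε}` forces `i ≤ δn` with
`δ = 2ε log 2 / c`. Such an `S'` is determined by `S ∆ S'`, a set of size `2i`, so there are at most
`(1 + x)^n / x^{2δn}` of them for every `0 < x ≤ 1`. On the other side `d ≥ ((1-c)/c)^k` is about
`e^{cRn}` with `R = log ((1-c)/c)`; choosing `x ≤ cR/4` and then `ε` with
`ε log 2 + 2δ log (1/x) = cR/4` leaves the count below `d N^{-ε}`. -/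

open Finset Real

section Combinatorics

variable {α : Type*} [Fintype α]

theorem card_filter_card_le_mul_pow_le (m : ℕ) {x : ℝ} (hx0 : 0 ≤ x) (hx1 : x ≤ 1) :
    (#{X : Finset α | #X ≤ m} : ℝ) * x ^ m ≤ (1 + x) ^ Fintype.card α := by
  calc (#{X : Finset α | #X ≤ m} : ℝ) * x ^ m = ∑ X : Finset α with #X ≤ m, x ^ m := by
        rw [sum_const, nsmul_eq_mul]
    _ ≤ ∑ X : Finset α with #X ≤ m, x ^ #X :=
        sum_le_sum fun X hX => pow_le_pow_of_le_one hx0 hx1 (mem_filter.1 hX).2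
    _ ≤ ∑ X : Finset α, x ^ #X :=
        sum_le_sum_of_subset_of_nonneg (filter_subset _ _) fun _ _ _ => by positivity
    _ = (1 + x) ^ Fintype.card α := by
        simpa [add_comm] using sum_pow_mul_eq_add_pow x 1 (univ : Finset α)

variable [DecidableEq α]

theorem filter_inter_eq_empty_eq_powersetCard (k : ℕ) (S S' : Finset α) :
    {T ∈ powersetCard k (univ : Finset α) | T ∩ S = ∅ ∧ T ∩ S' = ∅} = powersetCard k (S ∪ S')ᶜ := by
  ext T
  simp only [mem_filter, mem_powersetCard, subset_univ, true_and, ← disjoint_iff_inter_eq_empty,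
    compl_union, subset_inter_iff, subset_compl_iff_disjoint_right]
  tauto

theorem card_compl_union_eq (S S' : Finset α) :
    #(S ∪ S')ᶜ = Fintype.card α - #S - #(S' \ S) := by
  rw [card_compl, ← union_sdiff_self_eq_union, card_union_of_disjoint disjoint_sdiff, Nat.sub_sub]

theorem card_filter_card_sdiff_le_mul_pow_le (S : Finset α) (M : ℕ) {x : ℝ} (hx0 : 0 ≤ x)
    (hx1 : x ≤ 1) :
    (#{S' ∈ powersetCard #S univ | #(S' \ S) ≤ M} : ℝ) * x ^ (2 * M) ≤
      (1 + x) ^ Fintype.card α := by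
  refine le_trans (mul_le_mul_of_nonneg_right ?_ (by positivity))
    (card_filter_card_le_mul_pow_le (2 * M) hx0 hx1)
  refine mod_cast card_le_card_of_injOn (fun S' => symmDiff S' S) (fun S' hS' => ?_)
    (symmDiff_left_injective S).injOn
  obtain ⟨hS'S, hM⟩ := mem_filter.1 hS'
  have hcard : #(S \ S') = #(S' \ S) := card_sdiff_comm (mem_powersetCard.1 hS'S).2.symm
  simp only [coe_filter, Set.mem_ofPred_eq, mem_univ, true_and]
  rw [symmDiff_def, sup_eq_union, card_union_of_disjoint disjoint_sdiff_sdiff, hcard]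
  omega

theorem card_filter_lt_codegree_mul_pow_le {k : ℕ} (S : Finset α) (hS : #S = k) (θ : ℝ) (M : ℕ)
    (hM : ∀ i, θ < (Fintype.card α - k - i).choose k → i ≤ M) {x : ℝ} (hx0 : 0 ≤ x)
    (hx1 : x ≤ 1) :
    (#{S' ∈ powersetCard k univ |
        θ < #{T ∈ powersetCard k univ | T ∩ S = ∅ ∧ T ∩ S' = ∅}} : ℝ) * x ^ (2 * M) ≤
      (1 + x) ^ Fintype.card α := by
  subst hS
  refine le_trans (mul_le_mul_of_nonneg_right ?_ (by positivity))
    (card_filter_card_sdiff_le_mul_pow_le S M hx0 hx1)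
  refine mod_cast card_le_card fun S' hS' => ?_
  obtain ⟨hS'S, hθ⟩ := mem_filter.1 hS'
  rw [filter_inter_eq_empty_eq_powersetCard, card_powersetCard, card_compl_union_eq] at hθ
  exact mem_filter.2 ⟨hS'S, hM _ hθ⟩

end Combinatorics

namespace Nat

theorem div_pow_le_choose {m k : ℕ} (h : k ≤ m) : ((m : ℝ) / k) ^ k ≤ m.choose k := by
  induction k generalizing m with
  | zero => simp
  | succ k ih =>
    obtain ⟨m, rfl⟩ : ∃ m', m = m' + 1 := ⟨m - 1, by omega⟩
    rcases Nat.eq_zero_or_pos k with rfl | hk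
    · simp
    have hk' : (0 : ℝ) < k := by exact_mod_cast hk
    have hratio : ((m + 1 : ℕ) : ℝ) / (k + 1 : ℕ) ≤ m / k := by
      rw [div_le_div_iff₀ (by positivity) hk']
      push_cast
      nlinarith [(Nat.cast_le (α := ℝ)).2 (Nat.succ_le_succ_iff.1 h)]
    calc (((m + 1 : ℕ) : ℝ) / (k + 1 : ℕ)) ^ (k + 1)
        = ((m + 1 : ℕ) : ℝ) / (k + 1 : ℕ) * (((m + 1 : ℕ) : ℝ) / (k + 1 : ℕ)) ^ k := by ring
      _ ≤ ((m + 1 : ℕ) : ℝ) / (k + 1 : ℕ) * m.choose k := by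
        gcongr
        exact (pow_le_pow_left₀ (by positivity) hratio k).trans (ih (by omega))
      _ = (m + 1).choose (k + 1) := by
        rw [div_mul_eq_mul_div, div_eq_iff (by positivity)]
        exact_mod_cast Nat.add_one_mul_choose_eq m k

theorem cast_choose_eq_one_sub_div_mul (m k : ℕ) :
    (m.choose k : ℝ) = (1 - k / (m + 1)) * (m + 1).choose k := by
  rcases le_or_gt k (m + 1) with hk | hk
  · have h := Nat.choose_mul_succ_eq m k
    rw [← Nat.cast_inj (R := ℝ), Nat.cast_mul, Nat.cast_mul, Nat.cast_sub hk] at h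
    push_cast at h
    field_simp
    linarith
  · simp [Nat.choose_eq_zero_of_lt hk, Nat.choose_eq_zero_of_lt (Nat.lt_of_succ_lt hk)]

theorem cast_choose_sub_le_mul_pow {K k : ℕ} (hk : k ≤ K) (i : ℕ) :
    ((K - i).choose k : ℝ) ≤ K.choose k * (1 - k / K) ^ i := by
  have hr : 0 ≤ 1 - (k : ℝ) / K := by
    rcases Nat.eq_zero_or_pos K with rfl | hK
    · simp
    · rw [sub_nonneg, div_le_one (by exact_mod_cast hK)]; exact_mod_cast hk
  induction i with
  | zero => simp
  | succ i ih =>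
    have hstep : ((K - (i + 1)).choose k : ℝ) ≤ (1 - k / K) * (K - i).choose k := by
      rcases lt_or_ge i K with hi | hi
      · obtain ⟨m, hm⟩ : ∃ m, K - i = m + 1 := ⟨K - (i + 1), by omega⟩
        rw [show K - (i + 1) = m by omega, hm, cast_choose_eq_one_sub_div_mul m k]
        gcongr
        exact_mod_cast (by omega : m + 1 ≤ K)
      · rw [show K - (i + 1) = 0 by omega, show K - i = 0 by omega]
        rcases Nat.eq_zero_or_pos k with rfl | hk0
        · simp
        · simp [Nat.choose_eq_zero_of_lt hk0]
    calc ((K - (i + 1)).choose k : ℝ) ≤ (1 - k / K) * (K - i).choose k := hstep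
      _ ≤ (1 - k / K) * (K.choose k * (1 - k / K) ^ i) := by gcongr
      _ = K.choose k * (1 - k / K) ^ (i + 1) := by ring

end Nat

theorem exp_neg_le_cast_choose_rpow_neg {n k : ℕ} (hk : k ≤ n) {ε : ℝ} (hε : 0 ≤ ε) :
    exp (-(ε * n * log 2)) ≤ (n.choose k : ℝ) ^ (-ε) := by
  have hN : (0 : ℝ) < n.choose k := by exact_mod_cast Nat.choose_pos hk
  have hlog : log (n.choose k) ≤ n * log 2 := by
    rw [← log_pow]
    exact log_le_log hN (by exact_mod_cast Nat.choose_le_two_pow n k)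
  rw [rpow_def_of_pos hN, exp_le_exp]
  nlinarith

section Estimates

variable {c : ℝ} {n k : ℕ}

theorem le_of_mul_rpow_neg_lt_choose_sub (hc0 : 0 < c) (hc : c < 1 / 2) (hcn : 2 ≤ c * n)
    (hk1 : c * n - 1 < k) (hk2 : k ≤ c * n) {ε : ℝ} (hε : 0 ≤ ε) {i : ℕ}
    (hi : ((n - k).choose k : ℝ) * (n.choose k : ℝ) ^ (-ε) < (n - k - i).choose k) :
    (i : ℝ) ≤ 2 * ε * log 2 / c * n := by
  have hkK : k ≤ n - k := by
    suffices (k : ℝ) + k ≤ n by exact Nat.le_sub_of_add_le (by exact_mod_cast this)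
    nlinarith
  have hk0 : 0 < k := by exact_mod_cast (by linarith : (0 : ℝ) < k)
  have hK : (0 : ℝ) < (n - k : ℕ) := by exact_mod_cast hk0.trans_le hkK
  have hKn : ((n - k : ℕ) : ℝ) ≤ n := by exact_mod_cast Nat.sub_le n k
  have hD : (0 : ℝ) < (n - k).choose k := by exact_mod_cast Nat.choose_pos hkK
  have hratio : 1 - (k : ℝ) / (n - k : ℕ) ≤ exp (-(c / 2)) := by
    calc 1 - (k : ℝ) / (n - k : ℕ) ≤ 1 - c / 2 := by
          rw [sub_le_sub_iff_left, le_div_iff₀ hK]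
          nlinarith
      _ ≤ exp (-(c / 2)) := by linarith [add_one_le_exp (-(c / 2))]
  have hdecay : ((n - k - i).choose k : ℝ) ≤ (n - k).choose k * exp (-(c / 2 * i)) := by
    calc ((n - k - i).choose k : ℝ) ≤ (n - k).choose k * (1 - k / (n - k : ℕ)) ^ i :=
          Nat.cast_choose_sub_le_mul_pow hkK i
      _ ≤ (n - k).choose k * exp (-(c / 2)) ^ i := by
          gcongr
          rw [sub_nonneg, div_le_one hK]
          exact_mod_cast hkK
      _ = (n - k).choose k * exp (-(c / 2 * i)) := by rw [← exp_nat_mul]; ring_nf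
  have hlt : exp (-(ε * n * log 2)) < exp (-(c / 2 * i)) := by
    have := (mul_le_mul_of_nonneg_left
      (exp_neg_le_cast_choose_rpow_neg (by omega : k ≤ n) hε) hD.le).trans_lt (hi.trans_le hdecay)
    exact lt_of_mul_lt_mul_left this hD.le
  rw [exp_lt_exp] at hlt
  rw [div_mul_eq_mul_div, le_div_iff₀ hc0]
  nlinarith

theorem exp_le_cast_choose_mul_rpow_neg (hc0 : 0 < c) (hc : c < 1 / 2) (hcn : 1 ≤ c * n)
    (hk1 : c * n - 1 < k) (hk2 : k ≤ c * n) {ε : ℝ} (hε : 0 ≤ ε) :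
    exp ((c * n - 1) * log ((1 - c) / c) - ε * n * log 2) ≤
      ((n - k).choose k : ℝ) * (n.choose k : ℝ) ^ (-ε) := by
  have hk0 : (0 : ℝ) < k := by linarith
  have hkK : k ≤ n - k := by
    suffices (k : ℝ) + k ≤ n by exact Nat.le_sub_of_add_le (by exact_mod_cast this)
    nlinarith
  have hR : 0 < log ((1 - c) / c) := log_pos (by rw [lt_div_iff₀ hc0]; linarith)
  have hD : exp ((c * n - 1) * log ((1 - c) / c)) ≤ (n - k).choose k :=
    calc exp ((c * n - 1) * log ((1 - c) / c)) ≤ exp (k * log ((1 - c) / c)) := by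
          gcongr
      _ = ((1 - c) / c) ^ k := by rw [exp_nat_mul, exp_log (by bound)]
      _ ≤ (((n - k : ℕ) : ℝ) / k) ^ k := by
          refine pow_le_pow_left₀ (div_nonneg (by linarith) hc0.le) ?_ k
          rw [div_le_div_iff₀ hc0 hk0, Nat.cast_sub (by omega)]
          nlinarith
      _ ≤ (n - k).choose k := Nat.div_pow_le_choose hkK
  rw [sub_eq_add_neg, exp_add]
  exact mul_le_mul hD (exp_neg_le_cast_choose_rpow_neg (by omega) hε) (by positivity)
    (by positivity)

end Estimates

theorem one_add_pow_le_exp_mul_pow {c R x ε : ℝ} {n : ℕ} (hc0 : 0 < c) (hR : 0 < R)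
    (hx0 : 0 < x) (hx1 : x ≤ 1) (hxR : x ≤ c * R / 4)
    (hε : ε * log 2 * (c - 4 * log x) = c ^ 2 * R / 4) (hε0 : 0 ≤ ε) (hcn : 2 ≤ c * n) :
    (1 + x) ^ n ≤ exp ((c * n - 1) * R - ε * n * log 2) * x ^ (2 * ⌊2 * ε * log 2 / c * n⌋₊) := by
  set δ := 2 * ε * log 2 / c
  have hM : (⌊δ * n⌋₊ : ℝ) ≤ δ * n := Nat.floor_le (by positivity)
  have hlogx : log x ≤ 0 := log_nonpos hx0.le hx1
  have hδ : ε * log 2 * n - 2 * (δ * n) * log x = c * R / 4 * n := by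
    simp only [δ]
    field_simp
    linear_combination (4 * n) * hε
  have hfloor : 2 * (δ * n) * log x ≤ (2 * ⌊δ * n⌋₊ : ℕ) * log x := by
    push_cast
    nlinarith
  calc (1 + x) ^ n ≤ exp x ^ n := by gcongr; linarith [add_one_le_exp x]
    _ = exp (x * n) := by rw [← exp_nat_mul, mul_comm]
    _ ≤ exp ((c * n - 1) * R - ε * n * log 2 + (2 * ⌊δ * n⌋₊ : ℕ) * log x) := by
        gcongr
        nlinarith
    _ = exp ((c * n - 1) * R - ε * n * log 2) * x ^ (2 * ⌊δ * n⌋₊) := by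
        rw [exp_add, exp_nat_mul, exp_log hx0]

/-- For `0 < c < 1/2` there is `ε > 0` such that for all large `n`, with
`k = ⌊cn⌋`, `N = C(n,k)`, `d = C(n-k,k)`: every `k`-set `S` has codegree (in the
Kneser graph `K(n,k)`) larger than `d·N^{-ε}` with at most `d·N^{-ε}` of the
`k`-sets `S'`. -/
theorem stmt_12 (c : ℝ) (hc0 : 0 < c) (hc : c < 1 / 2) :
    ∃ ε : ℝ, 0 < ε ∧ ∃ n₀ : ℕ, ∀ n : ℕ, n₀ ≤ n →
      ∀ S : Finset (Fin n), S.card = ⌊c * n⌋₊ →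
        ((((Finset.univ : Finset (Fin n)).powersetCard ⌊c * n⌋₊).filter
            (fun S' : Finset (Fin n) =>
              (((((Finset.univ : Finset (Fin n)).powersetCard ⌊c * n⌋₊).filter
                  (fun T => T ∩ S = ∅ ∧ T ∩ S' = ∅)).card : ℝ)
                > ((n - ⌊c * n⌋₊).choose ⌊c * n⌋₊ : ℝ) *
                    (n.choose ⌊c * n⌋₊ : ℝ) ^ (-ε)))).card : ℝ)
          ≤ ((n - ⌊c * n⌋₊).choose ⌊c * n⌋₊ : ℝ) *
              (n.choose ⌊c * n⌋₊ : ℝ) ^ (-ε) := by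
  set R := log ((1 - c) / c)
  have hR : 0 < R := log_pos (by rw [lt_div_iff₀ hc0]; linarith)
  set x := min 1 (c * R / 4)
  have hx0 : 0 < x := lt_min one_pos (by positivity)
  have hlogx : log x ≤ 0 := log_nonpos hx0.le (min_le_left _ _)
  have hden : 0 < c - 4 * log x := by linarith
  set ε := c ^ 2 * R / (4 * log 2 * (c - 4 * log x))
  have hε0 : 0 < ε := by positivity
  have hε : ε * log 2 * (c - 4 * log x) = c ^ 2 * R / 4 := by
    simp only [ε]
    field_simp
  refine ⟨ε, hε0, ⌈2 / c⌉₊, fun n hn S hS => ?_⟩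
  have hcn : 2 ≤ c * n := by
    have := (div_le_iff₀' hc0).1 (Nat.ceil_le.1 hn)
    linarith
  have hk1 : c * n - 1 < ⌊c * n⌋₊ := by linarith [Nat.lt_floor_add_one (c * n)]
  have hk2 : (⌊c * n⌋₊ : ℝ) ≤ c * n := Nat.floor_le (by positivity)
  have hbad := card_filter_lt_codegree_mul_pow_le S hS _ ⌊2 * ε * log 2 / c * n⌋₊
    (fun i hi => Nat.le_floor (le_of_mul_rpow_neg_lt_choose_sub hc0 hc hcn hk1 hk2 hε0.le
      (by rwa [Fintype.card_fin] at hi))) hx0.le (min_le_left _ _)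
  rw [Fintype.card_fin] at hbad
  have hnum := (one_add_pow_le_exp_mul_pow hc0 hR hx0 (min_le_left _ _) (min_le_right _ _) hε
    hε0.le hcn).trans (mul_le_mul_of_nonneg_right
      (exp_le_cast_choose_mul_rpow_neg hc0 hc (by linarith) hk1 hk2 hε0.le) (by positivity))
  exact le_of_mul_le_mul_right (hbad.trans hnum) (by positivity)
end

section
/- Let n, k, m, s be natural numbers with m + s ≤ k. Let F₁, …, F_m be pairwise disjoint k-element subsets of {1,…,n} and let S be an s-element subset of {1,…,n} disjoint from each F_i. Let X be the number of k-element subsets E of {1,…,n} such that S ⊆ E and E ∩ F_i ≠ ∅ for every i = 1,…,m. Then k^m · C(n − m·k − s, k − m − s) ≤ X ≤ k^m · C(n, k − m), where C(·,·) denotes the binomial coefficient (interpreted as 0 when the lower index exceeds the upper index). -/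
/-!
For a choice `f` of one point in each `F i` and a set `T` avoiding `S` and every `F i`, the sets
`S ∪ {f i} ∪ T` are pairwise distinct admissible sets, and there are
`k^m · C(n - mk - s, k - m - s)` such pairs when `|T| = k - m - s`. Conversely, every admissible
`E` is `{f i} ∪ T` for a choice `f` of one point of `E ∩ F i` for each `i` and the remaining
`k - m` points `T` of `E`, so there are at most `k^m · C(n, k - m)` of them.
-/

open Finset Function

variable {α ι : Type*} [Fintype ι] [DecidableEq ι] {F : ι → Finset α} {S T : Finset α}
  {f : ι → α}

lemma Fintype.injective_of_mem_piFinset (hF : Pairwise (Disjoint on F))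
    (hf : f ∈ Fintype.piFinset F) : Injective f := by
  rw [Fintype.mem_piFinset] at hf
  intro i j hij
  by_contra hne
  exact disjoint_left.1 (hF hne) (hf i) (hij ▸ hf j)

variable [DecidableEq α]

lemma image_subset_biUnion_of_mem_piFinset (hf : f ∈ Fintype.piFinset F) :
    image f univ ⊆ univ.biUnion F := by
  simpa [image_subset_iff] using fun i => ⟨i, Fintype.mem_piFinset.1 hf i⟩

lemma union_image_union_inter_eq_singleton (hF : Pairwise (Disjoint on F))
    (hSF : ∀ i, Disjoint S (F i)) (hT : Disjoint T (S ∪ univ.biUnion F))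
    (hf : f ∈ Fintype.piFinset F) (i : ι) : (S ∪ image f univ ∪ T) ∩ F i = {f i} := by
  rw [Fintype.mem_piFinset] at hf
  ext x
  simp only [mem_inter, mem_union, mem_image, mem_univ, true_and, mem_singleton]
  constructor
  · rintro ⟨(hxS | ⟨j, rfl⟩) | hxT, hxF⟩
    · exact absurd hxF (disjoint_left.1 (hSF i) hxS)
    · by_contra hne
      exact disjoint_left.1 (hF fun h => hne (congrArg f h)) (hf j) hxF
    · exact absurd (mem_union_right S (mem_biUnion.2 ⟨i, mem_univ i, hxF⟩))
        (disjoint_left.1 hT hxT)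
  · rintro rfl
    exact ⟨Or.inl (Or.inr ⟨i, rfl⟩), hf i⟩

lemma union_image_union_sdiff_eq (hT : Disjoint T (S ∪ univ.biUnion F))
    (hf : f ∈ Fintype.piFinset F) : (S ∪ image f univ ∪ T) \ (S ∪ univ.biUnion F) = T := by
  rw [union_sdiff_distrib, hT.sdiff_eq_left, union_subset_iff.2
    ⟨subset_union_left, (image_subset_biUnion_of_mem_piFinset hf).trans subset_union_right⟩
    |> sdiff_eq_empty_iff_subset.2, empty_union]

theorem card_filter_forall_inter_nonempty_le [Fintype α] (hF : Pairwise (Disjoint on F))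
    (k : ℕ) :
    #{E ∈ powersetCard k (univ : Finset α) | ∀ i, (E ∩ F i).Nonempty}
      ≤ (∏ i, #(F i)) * (Fintype.card α).choose (k - Fintype.card ι) := by
  have hD : #(Fintype.piFinset F ×ˢ powersetCard (k - Fintype.card ι) (univ : Finset α))
      = (∏ i, #(F i)) * (Fintype.card α).choose (k - Fintype.card ι) := by
    simp [Fintype.card_piFinset, card_powersetCard]
  rw [← hD]
  refine card_le_card_of_surjOn (fun p => image p.1 univ ∪ p.2) ?_
  intro E hE
  simp only [coe_filter, mem_powersetCard_univ, Set.mem_ofPred_eq] at hE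
  obtain ⟨hEcard, hEF⟩ := hE
  choose f hf using hEF
  have hfF : f ∈ Fintype.piFinset F := Fintype.mem_piFinset.2 fun i => (mem_inter.1 (hf i)).2
  have hfE : image f univ ⊆ E := by
    simpa [image_subset_iff] using fun i => (mem_inter.1 (hf i)).1
  refine ⟨(f, E \ image f univ), mem_product.2 ⟨hfF, ?_⟩, union_sdiff_of_subset hfE⟩
  rw [mem_powersetCard_univ, card_sdiff_of_subset hfE, hEcard,
    card_image_of_injective _ (Fintype.injective_of_mem_piFinset hF hfF), card_univ]

theorem card_piFinset_mul_choose_le_card_filter [Fintype α] (hF : Pairwise (Disjoint on F))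
    (hSF : ∀ i, Disjoint S (F i)) {k : ℕ} (hk : Fintype.card ι + #S ≤ k) :
    (∏ i, #(F i)) * (#(S ∪ univ.biUnion F)ᶜ).choose (k - Fintype.card ι - #S)
      ≤ #{E ∈ powersetCard k univ | S ⊆ E ∧ ∀ i, (E ∩ F i).Nonempty} := by
  set R := (S ∪ univ.biUnion F)ᶜ
  have hD : #(Fintype.piFinset F ×ˢ powersetCard (k - Fintype.card ι - #S) R)
      = (∏ i, #(F i)) * (#R).choose (k - Fintype.card ι - #S) := by
    simp [Fintype.card_piFinset, card_powersetCard]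
  rw [← hD]
  -- `f` and `T` are read off `E` as its traces on the `F i` and on the complement `R`
  refine card_le_card_of_injOn (fun p => S ∪ image p.1 univ ∪ p.2) ?_ ?_
  · rintro ⟨f, T⟩ hp
    simp only [coe_product, Set.mem_prod, mem_coe, mem_powersetCard] at hp
    obtain ⟨hf, hTR, hTcard⟩ := hp
    have hT : Disjoint T (S ∪ univ.biUnion F) := subset_compl_iff_disjoint_right.1 hTR
    have hfB : image f univ ⊆ univ.biUnion F := image_subset_biUnion_of_mem_piFinset hf
    have hSf : Disjoint S (image f univ) :=
      ((disjoint_biUnion_right _ _ _).2 fun i _ => hSF i).mono_right hfB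
    have hSfT : Disjoint (S ∪ image f univ) T :=
      (hT.mono_right (union_subset_union_right hfB)).symm
    simp only [coe_filter, mem_powersetCard_univ, Set.mem_ofPred_eq]
    refine ⟨?_, subset_union_left.trans subset_union_left, fun i => ⟨f i, ?_⟩⟩
    · rw [card_union_of_disjoint hSfT, card_union_of_disjoint hSf,
        card_image_of_injective _ (Fintype.injective_of_mem_piFinset hF hf), card_univ, hTcard]
      omega
    · exact mem_inter.2 ⟨mem_union_left _ (mem_union_right _ (mem_image_of_mem f (mem_univ i))),
        Fintype.mem_piFinset.1 hf i⟩
  · rintro ⟨f, T⟩ hp ⟨f', T'⟩ hp' heq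
    simp only [coe_product, Set.mem_prod, mem_coe, mem_powersetCard] at hp hp'
    have hT := subset_compl_iff_disjoint_right.1 hp.2.1
    have hT' := subset_compl_iff_disjoint_right.1 hp'.2.1
    refine Prod.ext (funext fun i => singleton_injective ?_) ?_
    · rw [← union_image_union_inter_eq_singleton hF hSF hT hp.1,
        ← union_image_union_inter_eq_singleton hF hSF hT' hp'.1]
      exact congrArg (· ∩ F i) heq
    · rw [← union_image_union_sdiff_eq hT hp.1, ← union_image_union_sdiff_eq hT' hp'.1]
      exact congrArg (· \ _) heq

/-- Bounds on the number of `k`-sets `E` containing a fixed `s`-set `S` and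
meeting each of `m` pairwise disjoint `k`-sets `F₁,…,F_m` (all disjoint from
`S`): the count `X` satisfies
`k^m · C(n - mk - s, k - m - s) ≤ X ≤ k^m · C(n, k - m)`. -/
theorem stmt_13 (n k m s : ℕ) (hms : m + s ≤ k)
    (F : Fin m → Finset (Fin n)) (hFcard : ∀ i, (F i).card = k)
    (hFdisj : ∀ i j, i ≠ j → Disjoint (F i) (F j))
    (S : Finset (Fin n)) (hS : S.card = s) (hSF : ∀ i, Disjoint S (F i)) :
    k ^ m * (n - m * k - s).choose (k - m - s)
        ≤ (((Finset.univ : Finset (Fin n)).powersetCard k).filter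
            (fun E => S ⊆ E ∧ ∀ i, (E ∩ F i).Nonempty)).card ∧
      (((Finset.univ : Finset (Fin n)).powersetCard k).filter
          (fun E => S ⊆ E ∧ ∀ i, (E ∩ F i).Nonempty)).card
        ≤ k ^ m * n.choose (k - m) := by
  have hF : Pairwise (Disjoint on F) := hFdisj
  have hprod : ∏ i, #(F i) = k ^ m := by simp [hFcard]
  have hB : #(univ.biUnion F) = m * k := by
    rw [card_biUnion fun i _ j _ => hFdisj i j]
    simp [hFcard]
  have hR : #(S ∪ univ.biUnion F)ᶜ = n - m * k - s := by
    rw [card_compl, card_union_of_disjoint ((disjoint_biUnion_right _ _ _).2 fun i _ => hSF i),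
      hS, hB, Fintype.card_fin]
    omega
  constructor
  · have := card_piFinset_mul_choose_le_card_filter hF hSF (k := k) (by simpa [hS] using hms)
    rw [hprod, hR, Fintype.card_fin, hS] at this
    convert this
  · calc _ ≤ #{E ∈ powersetCard k univ | ∀ i, (E ∩ F i).Nonempty} :=
          card_le_card (monotone_filter_right _ fun _ _ h => h.2)
      _ ≤ k ^ m * n.choose (k - m) := by
          convert card_filter_forall_inter_nonempty_le hF k <;> simp [hprod]
end
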